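/- arXiv:2103.10289 — 2 statements merged into one kernel-verified Lean document; each statement's English description precedes it below -/
import Mathlib

section
/- Let (X,‖·‖) be a Banach space and T : X → X a (k,h)-enriched Bianchini mapping, i.e. there exist h ∈ [0,1) and k ∈ [0,∞) such that ‖k(x−y) + Tx − Ty‖ ≤ h·max{‖x − Tx‖, ‖y − Ty‖} for all x,y ∈ X. Then: (1) T has a unique fixed point p; (2) there exists λ ∈ (0,1] such that the Krasnoselskij iteration xₙ₊₁ = (1−λ)xₙ + λTxₙ converges to p for every x₀ ∈ X; (3) the estimate ‖xₙ − p‖ ≤ hⁿ/(1−h)·‖x₀ − x₁‖ holds for all n ≥ 0. -/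
/-!
For `λ = 1/(k+1)` the averaged map `S = (1-λ)I + λT` satisfies `x - Sx = λ(x - Tx)` and
`Sx - Sy = λ(k(x-y) + Tx - Ty)`, so the enriched condition on `T` says exactly that `S` is a
Bianchini map with the same constant `h`, and `S` and `T` have the same fixed points. For a
Bianchini map the Picard steps contract geometrically, `d(Sx, S²x) ≤ h d(x, Sx)`, so every
Picard orbit is Cauchy with the usual a priori estimate, and its limit is a fixed point.
-/

open Filter Function Topology

section Bianchini

variable {α : Type*} [MetricSpace α]

def BianchiniWith (h : ℝ) (S : α → α) : Prop :=
  ∀ x y, dist (S x) (S y) ≤ h * max (dist x (S x)) (dist y (S y))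

namespace BianchiniWith

variable {S : α → α} {h : ℝ}

theorem eq_of_isFixedPt (hS : BianchiniWith h S) {p q : α} (hp : IsFixedPt S p)
    (hq : IsFixedPt S q) : q = p := by
  have H := hS q p
  rw [hq, hp, dist_self, dist_self, max_self, mul_zero] at H
  exact dist_le_zero.1 H

theorem dist_apply_apply_le (hS : BianchiniWith h S) (h0 : 0 ≤ h) (h1 : h < 1) (x : α) :
    dist (S x) (S (S x)) ≤ h * dist x (S x) := by
  have H := hS x (S x)
  rcases le_total (dist x (S x)) (dist (S x) (S (S x))) with hle | hle
  · rw [max_eq_right hle] at H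
    have hzero : dist (S x) (S (S x)) ≤ 0 := by nlinarith [dist_nonneg (x := S x) (y := S (S x))]
    exact hzero.trans (mul_nonneg h0 dist_nonneg)
  · rwa [max_eq_left hle] at H

theorem dist_iterate_succ_le (hS : BianchiniWith h S) (h0 : 0 ≤ h) (h1 : h < 1) (x : α)
    (n : ℕ) : dist (S^[n] x) (S^[n + 1] x) ≤ dist x (S x) * h ^ n := by
  induction n with
  | zero => simp
  | succ n ih =>
    rw [iterate_succ_apply' S (n + 1), iterate_succ_apply']
    calc dist (S (S^[n] x)) (S (S (S^[n] x))) ≤ h * dist (S^[n] x) (S (S^[n] x)) :=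
          hS.dist_apply_apply_le h0 h1 _
      _ ≤ h * (dist x (S x) * h ^ n) := by
          rw [← iterate_succ_apply' S n]
          exact mul_le_mul_of_nonneg_left ih h0
      _ = dist x (S x) * h ^ (n + 1) := by ring

theorem isFixedPt_of_tendsto_iterate (hS : BianchiniWith h S) (h1 : h < 1) {x p : α}
    (hx : Tendsto (fun n ↦ S^[n] x) atTop (𝓝 p)) : IsFixedPt S p := by
  have hx' : Tendsto (fun n ↦ S (S^[n] x)) atTop (𝓝 p) := by
    simpa only [comp_def, iterate_succ_apply'] using hx.comp (tendsto_add_atTop_nat 1)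
  have hlim : dist p (S p) ≤ h * max (dist p p) (dist p (S p)) :=
    le_of_tendsto_of_tendsto' (hx'.dist tendsto_const_nhds)
      (((hx.dist hx').max tendsto_const_nhds).const_mul h) fun n ↦ hS (S^[n] x) p
  rw [dist_self, max_eq_right dist_nonneg] at hlim
  exact (dist_le_zero.1 (by nlinarith [dist_nonneg (x := p) (y := S p)])).symm

theorem exists_tendsto_iterate [CompleteSpace α] (hS : BianchiniWith h S) (h0 : 0 ≤ h)
    (h1 : h < 1) (x : α) : ∃ p, Tendsto (fun n ↦ S^[n] x) atTop (𝓝 p) ∧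
      ∀ n, dist (S^[n] x) p ≤ h ^ n / (1 - h) * dist x (S x) := by
  have hstep := hS.dist_iterate_succ_le h0 h1 x
  obtain ⟨p, hp⟩ := cauchySeq_tendsto_of_complete (cauchySeq_of_le_geometric h _ h1 hstep)
  refine ⟨p, hp, fun n ↦ ?_⟩
  calc dist (S^[n] x) p ≤ dist x (S x) * h ^ n / (1 - h) :=
        dist_le_of_le_geometric_of_tendsto h _ h1 hstep hp n
    _ = h ^ n / (1 - h) * dist x (S x) := by ring

theorem exists_unique_fixedPoint [Nonempty α] [CompleteSpace α] (hS : BianchiniWith h S)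
    (h0 : 0 ≤ h) (h1 : h < 1) :
    ∃ p, IsFixedPt S p ∧ (∀ q, IsFixedPt S q → q = p) ∧
      ∀ x, Tendsto (fun n ↦ S^[n] x) atTop (𝓝 p) ∧
        ∀ n, dist (S^[n] x) p ≤ h ^ n / (1 - h) * dist x (S x) := by
  obtain ⟨p, hp, -⟩ := hS.exists_tendsto_iterate h0 h1 (Classical.arbitrary α)
  have hfix := hS.isFixedPt_of_tendsto_iterate h1 hp
  refine ⟨p, hfix, fun q hq ↦ hS.eq_of_isFixedPt hfix hq, fun x ↦ ?_⟩
  obtain ⟨p', hp', hest⟩ := hS.exists_tendsto_iterate h0 h1 x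
  obtain rfl := hS.eq_of_isFixedPt (hS.isFixedPt_of_tendsto_iterate h1 hp') hfix
  exact ⟨hp', hest⟩

end BianchiniWith

end Bianchini

section Krasnoselskij

variable {R E : Type*} [Field R] [AddCommGroup E] [Module R E] (T : E → E)

def krasnoselskijMap (lam : R) (z : E) : E :=
  (1 - lam) • z + lam • T z

theorem sub_krasnoselskijMap (lam : R) (x : E) :
    x - krasnoselskijMap T lam x = lam • (x - T x) := by
  unfold krasnoselskijMap
  module

theorem krasnoselskijMap_sub_krasnoselskijMap {lam k : R} (hlam : lam * (k + 1) = 1) (x y : E) :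
    krasnoselskijMap T lam x - krasnoselskijMap T lam y = lam • (k • (x - y) + T x - T y) := by
  have hlk : 1 - lam = lam * k := by linear_combination -hlam
  unfold krasnoselskijMap
  rw [hlk]
  module

theorem isFixedPt_krasnoselskijMap_iff {lam : R} (hlam : lam ≠ 0) {x : E} :
    IsFixedPt (krasnoselskijMap T lam) x ↔ IsFixedPt T x := by
  rw [IsFixedPt, IsFixedPt, ← sub_eq_zero, ← neg_eq_zero, neg_sub, sub_krasnoselskijMap,
    smul_eq_zero, or_iff_right hlam, sub_eq_zero, eq_comm]

end Krasnoselskij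

theorem bianchiniWith_krasnoselskijMap {X : Type*} [NormedAddCommGroup X] [NormedSpace ℝ X]
    {T : X → X} {k h : ℝ} (hk : 0 ≤ k)
    (hT : ∀ x y : X, ‖k • (x - y) + T x - T y‖ ≤ h * max ‖x - T x‖ ‖y - T y‖) :
    BianchiniWith h (krasnoselskijMap T (k + 1)⁻¹) := by
  have hlam0 : (0 : ℝ) < (k + 1)⁻¹ := by positivity
  have hlam : (k + 1)⁻¹ * (k + 1) = 1 := inv_mul_cancel₀ (by positivity)
  intro x y
  simp only [dist_eq_norm, krasnoselskijMap_sub_krasnoselskijMap T hlam, sub_krasnoselskijMap,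
    norm_smul, Real.norm_of_nonneg hlam0.le, ← mul_max_of_nonneg _ _ hlam0.le]
  calc (k + 1)⁻¹ * ‖k • (x - y) + T x - T y‖ ≤ (k + 1)⁻¹ * (h * max ‖x - T x‖ ‖y - T y‖) :=
        mul_le_mul_of_nonneg_left (hT x y) hlam0.le
    _ = h * ((k + 1)⁻¹ * max ‖x - T x‖ ‖y - T y‖) := by ring

/-- **Corollary (Berinde–Păcurar).** Let `X` be a Banach space and `T : X → X`
a `(k,h)`-enriched Bianchini mapping: `h ∈ [0,1)`, `k ≥ 0` and
`‖k(x−y) + Tx − Ty‖ ≤ h·max{‖x − Tx‖, ‖y − Ty‖}` for all `x,y`. Then `T` has a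
unique fixed point `p`; there exists `λ ∈ (0,1]` such that the Krasnoselskij
iteration converges to `p` for every `x₀`, with the a priori estimate
`‖xₙ − p‖ ≤ hⁿ/(1−h)·‖x₀ − x₁‖`. -/
theorem enriched_bianchini_fixed_point
    {X : Type*} [NormedAddCommGroup X] [NormedSpace ℝ X] [CompleteSpace X]
    (T : X → X) (k h : ℝ) (hk : 0 ≤ k) (hh : h ∈ Set.Ico (0 : ℝ) 1)
    (hT : ∀ x y : X, ‖k • (x - y) + T x - T y‖ ≤ h * max ‖x - T x‖ ‖y - T y‖) :
    ∃ p : X, T p = p ∧ (∀ q : X, T q = q → q = p) ∧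
      ∃ lam ∈ Set.Ioc (0 : ℝ) 1,
        ∀ x₀ : X,
          Filter.Tendsto (fun n => (fun z => (1 - lam) • z + lam • T z)^[n] x₀)
            Filter.atTop (nhds p) ∧
          ∀ n : ℕ, ‖(fun z => (1 - lam) • z + lam • T z)^[n] x₀ - p‖ ≤
            h ^ n / (1 - h) * ‖x₀ - ((1 - lam) • x₀ + lam • T x₀)‖ := by
  have hlam : (k + 1)⁻¹ ∈ Set.Ioc (0 : ℝ) 1 := ⟨by positivity, inv_le_one_of_one_le₀ (by linarith)⟩
  have hfix {x : X} := isFixedPt_krasnoselskijMap_iff T hlam.1.ne' (x := x)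
  obtain ⟨p, hp, huniq, hconv⟩ :=
    (bianchiniWith_krasnoselskijMap hk hT).exists_unique_fixedPoint hh.1 hh.2
  refine ⟨p, hfix.1 hp, fun q hq ↦ huniq q (hfix.2 hq), _, hlam, fun x₀ ↦ ?_⟩
  obtain ⟨htend, hest⟩ := hconv x₀
  refine ⟨htend, fun n ↦ ?_⟩
  rw [← dist_eq_norm, ← dist_eq_norm]
  exact hest n
end

section
/- Let (X,‖·‖) be a Banach space and T : X → X a (k,b)-enriched Chatterjea mapping, i.e. there exist b ∈ [0,1/2) and k ∈ [0,∞) such that ‖k(x−y) + Tx − Ty‖ ≤ b(‖(k+1)(x−y) + y − Ty‖ + ‖(k+1)(y−x) + x − Tx‖) for all x,y ∈ X. Then: (1) T has a unique fixed point p; (2) there exists λ ∈ (0,1] such that the Krasnoselskij iteration xₙ₊₁ = (1−λ)xₙ + λTxₙ converges to p for every x₀ ∈ X; (3) with δ = b/(1−b), the estimate ‖xₙ − p‖ ≤ δⁿ/(1−δ)·‖x₀ − x₁‖ holds for all n ≥ 0. -/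
/-!
For `λ = 1/(k+1)` the Krasnoselskij map `T_λ = (1-λ) id + λ T` satisfies
`T_λ x - T_λ y = λ (k(x-y) + Tx - Ty)` and `x - T_λ y = λ ((k+1)(x-y) + y - Ty)`, so the enriched
condition on `T` says exactly that `T_λ` is a Chatterjea map with constant `b`; and `T_λ` has the
same fixed points as `T`. For a Chatterjea map consecutive steps shrink by `δ = b/(1-b) < 1`, so
every orbit is Cauchy with the geometric a priori estimate, and its limit is fixed because the
Chatterjea inequality passes to the limit without any continuity of the map.
-/

open Filter Topology Function

section Chatterjea

variable {α : Type*} [MetricSpace α] {b : ℝ} {f : α → α}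

def IsChatterjea (b : ℝ) (f : α → α) : Prop :=
  ∀ x y, dist (f x) (f y) ≤ b * (dist x (f y) + dist y (f x))

namespace IsChatterjea

theorem dist_map_map_le (hf : IsChatterjea b f) (hb₀ : 0 ≤ b) (hb₁ : b < 1) (x : α) :
    dist (f x) (f (f x)) ≤ b / (1 - b) * dist x (f x) := by
  have h := hf x (f x)
  rw [dist_self, add_zero] at h
  have htri := mul_le_mul_of_nonneg_left (dist_triangle x (f x) (f (f x))) hb₀
  rw [div_mul_eq_mul_div, le_div_iff₀ (by linarith)]
  linarith

theorem dist_iterate_succ_le (hf : IsChatterjea b f) (hb₀ : 0 ≤ b) (hb₁ : b < 1) (x : α)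
    (n : ℕ) : dist (f^[n] x) (f^[n + 1] x) ≤ dist x (f x) * (b / (1 - b)) ^ n := by
  induction n with
  | zero => simp
  | succ n ih =>
    have hδ : 0 ≤ b / (1 - b) := div_nonneg hb₀ (by linarith)
    calc dist (f^[n + 1] x) (f^[n + 2] x) = dist (f (f^[n] x)) (f (f (f^[n] x))) := by
          simp only [iterate_succ_apply']
      _ ≤ b / (1 - b) * dist (f^[n] x) (f^[n + 1] x) := by
          rw [iterate_succ_apply']
          exact hf.dist_map_map_le hb₀ hb₁ _
      _ ≤ b / (1 - b) * (dist x (f x) * (b / (1 - b)) ^ n) := by gcongr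
      _ = dist x (f x) * (b / (1 - b)) ^ (n + 1) := by ring

theorem isFixedPt_of_tendsto (hf : IsChatterjea b f) (hb₁ : b < 1) {x q : α}
    (h : Tendsto (fun n => f^[n] x) atTop (𝓝 q)) : IsFixedPt f q := by
  have hsucc : Tendsto (fun n => f^[n + 1] x) atTop (𝓝 q) := h.comp (tendsto_add_atTop_nat 1)
  have hle : dist (f q) q ≤ b * (dist q q + dist q (f q)) :=
    le_of_tendsto_of_tendsto' (tendsto_const_nhds.dist hsucc)
      (((tendsto_const_nhds.dist hsucc).add (h.dist tendsto_const_nhds)).const_mul b)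
      fun n => by simpa only [iterate_succ_apply'] using hf q (f^[n] x)
  rw [dist_self, zero_add, dist_comm q] at hle
  exact dist_le_zero.mp (by nlinarith [dist_nonneg (x := f q) (y := q)])

theorem eq_of_isFixedPt (hf : IsChatterjea b f) (hb : b < 1 / 2) {p q : α}
    (hp : IsFixedPt f p) (hq : IsFixedPt f q) : p = q := by
  have h := hf p q
  rw [hp.eq, hq.eq, dist_comm q p] at h
  exact dist_le_zero.mp (by nlinarith [dist_nonneg (x := p) (y := q)])

theorem exists_isFixedPt_tendsto [CompleteSpace α] (hf : IsChatterjea b f) (hb₀ : 0 ≤ b)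
    (hb₁ : b < 1 / 2) (x : α) :
    ∃ q, IsFixedPt f q ∧ Tendsto (fun n => f^[n] x) atTop (𝓝 q) ∧
      ∀ n : ℕ, dist (f^[n] x) q ≤ (b / (1 - b)) ^ n / (1 - b / (1 - b)) * dist x (f x) := by
  have hδ : b / (1 - b) < 1 := by rw [div_lt_one (by linarith)]; linarith
  have hstep := hf.dist_iterate_succ_le hb₀ (by linarith) x
  obtain ⟨q, hq⟩ := cauchySeq_tendsto_of_complete (cauchySeq_of_le_geometric _ _ hδ hstep)
  refine ⟨q, hf.isFixedPt_of_tendsto (by linarith) hq, hq, fun n => ?_⟩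
  calc dist (f^[n] x) q ≤ dist x (f x) * (b / (1 - b)) ^ n / (1 - b / (1 - b)) :=
        dist_le_of_le_geometric_of_tendsto _ _ hδ hstep hq n
    _ = (b / (1 - b)) ^ n / (1 - b / (1 - b)) * dist x (f x) := by ring

end IsChatterjea

end Chatterjea

section Enriched

variable {X : Type*} [NormedAddCommGroup X] [NormedSpace ℝ X]

def IsEnrichedChatterjea (k b : ℝ) (T : X → X) : Prop :=
  ∀ x y, ‖k • (x - y) + T x - T y‖ ≤
    b * (‖(k + 1) • (x - y) + y - T y‖ + ‖(k + 1) • (y - x) + x - T x‖)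

def krasnoselskij (T : X → X) (lam : ℝ) (z : X) : X := (1 - lam) • z + lam • T z

theorem krasnoselskij_isFixedPt_iff {T : X → X} {lam : ℝ} (hlam : lam ≠ 0) {z : X} :
    IsFixedPt (krasnoselskij T lam) z ↔ IsFixedPt T z := by
  have h : krasnoselskij T lam z - z = lam • (T z - z) := by
    unfold krasnoselskij
    module
  rw [IsFixedPt, IsFixedPt, ← sub_eq_zero, h, smul_eq_zero, sub_eq_zero, or_iff_right hlam]

theorem krasnoselskij_sub_krasnoselskij (T : X → X) {k : ℝ} (hk : k + 1 ≠ 0) (x y : X) :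
    krasnoselskij T (k + 1)⁻¹ x - krasnoselskij T (k + 1)⁻¹ y =
      (k + 1)⁻¹ • (k • (x - y) + T x - T y) := by
  unfold krasnoselskij
  match_scalars <;> field_simp <;> ring

theorem sub_krasnoselskij (T : X → X) {k : ℝ} (hk : k + 1 ≠ 0) (x y : X) :
    x - krasnoselskij T (k + 1)⁻¹ y = (k + 1)⁻¹ • ((k + 1) • (x - y) + y - T y) := by
  unfold krasnoselskij
  match_scalars <;> field_simp
  ring

theorem IsEnrichedChatterjea.isChatterjea_krasnoselskij {T : X → X} {k b : ℝ} (hk : 0 ≤ k)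
    (hT : IsEnrichedChatterjea k b T) : IsChatterjea b (krasnoselskij T (k + 1)⁻¹) := by
  intro x y
  have hk₁ : k + 1 ≠ 0 := by positivity
  have hlam : 0 ≤ (k + 1)⁻¹ := by positivity
  simp only [dist_eq_norm, krasnoselskij_sub_krasnoselskij T hk₁, sub_krasnoselskij T hk₁,
    norm_smul, Real.norm_of_nonneg hlam]
  rw [← mul_add, mul_left_comm]
  exact mul_le_mul_of_nonneg_left (hT x y) hlam

end Enriched

/-- **Corollary (Berinde–Păcurar).** Let `X` be a Banach space and `T : X → X`
a `(k,b)`-enriched Chatterjea mapping: `b ∈ [0,1/2)`, `k ≥ 0` and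
`‖k(x−y) + Tx − Ty‖ ≤ b(‖(k+1)(x−y) + y − Ty‖ + ‖(k+1)(y−x) + x − Tx‖)` for all
`x,y`. Then `T` has a unique fixed point `p`; there exists `λ ∈ (0,1]` such that
the Krasnoselskij iteration converges to `p` for every `x₀`, with the a priori
estimate for `δ = b/(1−b)`. -/
theorem enriched_chatterjea_fixed_point
    {X : Type*} [NormedAddCommGroup X] [NormedSpace ℝ X] [CompleteSpace X]
    (T : X → X) (k b : ℝ) (hk : 0 ≤ k) (hb : b ∈ Set.Ico (0 : ℝ) (1 / 2))
    (hT : ∀ x y : X, ‖k • (x - y) + T x - T y‖ ≤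
      b * (‖(k + 1) • (x - y) + y - T y‖ + ‖(k + 1) • (y - x) + x - T x‖)) :
    ∃ p : X, T p = p ∧ (∀ q : X, T q = q → q = p) ∧
      ∃ lam ∈ Set.Ioc (0 : ℝ) 1,
        ∀ x₀ : X,
          Filter.Tendsto (fun n => (fun z => (1 - lam) • z + lam • T z)^[n] x₀)
            Filter.atTop (nhds p) ∧
          ∀ n : ℕ, ‖(fun z => (1 - lam) • z + lam • T z)^[n] x₀ - p‖ ≤
            (b / (1 - b)) ^ n / (1 - b / (1 - b)) *
              ‖x₀ - ((1 - lam) • x₀ + lam • T x₀)‖ := by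
  obtain ⟨hb₀, hb₁⟩ := hb
  have hlam : (k + 1)⁻¹ ∈ Set.Ioc (0 : ℝ) 1 := ⟨by positivity, inv_le_one_of_one_le₀ (by linarith)⟩
  have hf := IsEnrichedChatterjea.isChatterjea_krasnoselskij hk hT
  have hfix {z : X} := krasnoselskij_isFixedPt_iff (T := T) (z := z) hlam.1.ne'
  obtain ⟨p, hp, -⟩ := hf.exists_isFixedPt_tendsto hb₀ hb₁ 0
  refine ⟨p, hfix.mp hp, fun q hq => hf.eq_of_isFixedPt hb₁ (hfix.mpr hq) hp, _, hlam,
    fun x₀ => ?_⟩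
  obtain ⟨q, hq, hlim, hest⟩ := hf.exists_isFixedPt_tendsto hb₀ hb₁ x₀
  obtain rfl := hf.eq_of_isFixedPt hb₁ hq hp
  simp only [dist_eq_norm] at hest
  exact ⟨hlim, hest⟩
end
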